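/- arXiv:2006.04626 — 2 statements merged into one kernel-verified Lean document; each statement's English description precedes it below -/
import Mathlib

section
/- Let (S, f) be a Frobenius GNS in ℕ_0^d. Then S is almost symmetric if and only if for every gap h ∈ H(S), either f − h ∈ S or f − h ∈ PF(S). -/
open scoped BigOperators

/-- A generalized numerical semigroup: a submonoid of `ℕ^d` with finite complement. -/
def IsGNS {d : ℕ} (S : Set (Fin d → ℕ)) : Prop :=
  (0 : Fin d → ℕ) ∈ S ∧ (∀ x y : Fin d → ℕ, x ∈ S → y ∈ S → x + y ∈ S) ∧ Sᶜ.Finite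

/-- The genus: number of gaps. -/
noncomputable def genus {d : ℕ} (S : Set (Fin d → ℕ)) : ℕ := Sᶜ.ncard

/-- Pseudo-Frobenius elements. -/
def PF {d : ℕ} (S : Set (Fin d → ℕ)) : Set (Fin d → ℕ) :=
  {h | h ∉ S ∧ ∀ s ∈ S, s ≠ 0 → h + s ∈ S}

/-- The type: number of pseudo-Frobenius elements. -/
noncomputable def typ {d : ℕ} (S : Set (Fin d → ℕ)) : ℕ := (PF S).ncard

/-- Maximal elements of a set with respect to a relation. -/
def Maximals {α : Type*} (le : α → α → Prop) (X : Set α) : Set α :=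
  {x ∈ X | ∀ y ∈ X, le x y → x = y}

/-- `f` is the unique maximal element of the set of gaps w.r.t. the componentwise order. -/
def IsFrobenius {d : ℕ} (S : Set (Fin d → ℕ)) (f : Fin d → ℕ) : Prop :=
  Maximals (· ≤ ·) Sᶜ = {f}

/-- Almost symmetric: `2 g(S) + 1 - t(S) = ∏ (h i + 1)` for some gap `h`. -/
def AlmostSymmetric {d : ℕ} (S : Set (Fin d → ℕ)) : Prop :=
  ∃ h ∉ S, 2 * genus S + 1 = typ S + ∏ i, (h i + 1)

/-- Special gaps. -/
def SG {d : ℕ} (S : Set (Fin d → ℕ)) : Set (Fin d → ℕ) :=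
  {h ∈ PF S | h + h ∈ S}

/-- The partial order `≤_S` : `y ≤_S x` iff `x - y ∈ S`. -/
def leS {d : ℕ} (S : Set (Fin d → ℕ)) (x y : Fin d → ℕ) : Prop :=
  ∃ s ∈ S, x + s = y

/-- The Apéry set of `S` with respect to `n`. -/
def Ap {d : ℕ} (S : Set (Fin d → ℕ)) (n : Fin d → ℕ) : Set (Fin d → ℕ) :=
  {s ∈ S | ¬ ∃ u ∈ S, u + n = s}

/-- The reduced Apéry set of `S` with respect to `n`. -/
def Cred {d : ℕ} (S : Set (Fin d → ℕ)) (n : Fin d → ℕ) : Set (Fin d → ℕ) :=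
  {s ∈ Ap S n | ∃ h, h ∉ S ∧ s ≤ h + n}

/-- A monomial order on `ℕ^d` given by its strict-order relation. -/
def IsMonomialOrder (d : ℕ) (lt : (Fin d → ℕ) → (Fin d → ℕ) → Prop) : Prop :=
  (∀ a, ¬ lt a a) ∧ (∀ a b c, lt a b → lt b c → lt a c) ∧
  (∀ a b, a ≠ b → lt a b ∨ lt b a) ∧
  (∀ u a b, lt a b → lt (a + u) (b + u)) ∧
  (∀ a, a ≠ (0 : Fin d → ℕ) → lt 0 a)

/-- Minimal generator of a GNS. -/
def IsMinGen {d : ℕ} (S : Set (Fin d → ℕ)) (x : Fin d → ℕ) : Prop :=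
  x ∈ S ∧ x ≠ 0 ∧ ∀ y ∈ S, ∀ z ∈ S, y ≠ 0 → z ≠ 0 → y + z ≠ x

/-- Irreducible GNS: not an intersection of two GNSs properly containing it. -/
def GNSIrreducible {d : ℕ} (S : Set (Fin d → ℕ)) : Prop :=
  ¬ ∃ S₁ S₂ : Set (Fin d → ℕ), IsGNS S₁ ∧ IsGNS S₂ ∧ S ⊂ S₁ ∧ S ⊂ S₂ ∧ S = S₁ ∩ S₂

/-- Pseudo-symmetric: `PF S = {f, f/2}`. -/
def PseudoSymmetric {d : ℕ} (S : Set (Fin d → ℕ)) : Prop :=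
  ∃ f q : Fin d → ℕ, f ≠ q ∧ q + q = f ∧ PF S = {f, q}

/-!
Every gap lies in the box `[0, f]`, and `x ↦ f - x` maps `S ∩ [0, f]` injectively onto the gaps
`h` with `f - h ∈ S`. Hence `2 g(S) = |f + 1|_× + |L|`, where `L` is the set of gaps `h` with
`f - h` also a gap. Since `PF(S) \ {f} ⊆ L`, we get `2 g(S) + 1 - t(S) ≥ |f + 1|_× ≥ |h + 1|_×`
for every gap `h`, with equality somewhere iff `PF(S) \ {f} = L`, i.e. iff `L ⊆ PF(S)`.
-/

open Set

theorem ncard_Iic_eq_prod {d : ℕ} (f : Fin d → ℕ) : (Iic f).ncard = ∏ i, (f i + 1) := by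
  rw [← Finset.coe_Iic, ncard_coe_finset, Pi.card_Iic]
  simp

def dualGaps {d : ℕ} (S : Set (Fin d → ℕ)) (f : Fin d → ℕ) : Set (Fin d → ℕ) :=
  {h | h ∉ S ∧ f - h ∉ S}

namespace IsFrobenius

variable {d : ℕ} {S : Set (Fin d → ℕ)} {f : Fin d → ℕ}

theorem mem_maximals (hf : IsFrobenius S f) : f ∈ Maximals (· ≤ ·) Sᶜ := hf ▸ rfl

theorem notMem (hf : IsFrobenius S f) : f ∉ S := hf.mem_maximals.1

theorem le_of_notMem (hf : IsFrobenius S f) (hfin : Sᶜ.Finite) {h : Fin d → ℕ} (hh : h ∉ S) :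
    h ≤ f := by
  obtain ⟨m, ⟨hmS, hhm⟩, hmax⟩ :=
    hfin.subset (fun y hy => hy.1) |>.exists_maximalFor id {y | y ∉ S ∧ h ≤ y} ⟨h, hh, le_rfl⟩
  have hm : m ∈ Maximals (· ≤ ·) Sᶜ :=
    ⟨hmS, fun y hy hmy => le_antisymm hmy (hmax ⟨hy, hhm.trans hmy⟩ hmy)⟩
  rw [hf, mem_singleton_iff] at hm
  exact hm ▸ hhm

theorem mem_PF (hf : IsFrobenius S f) : f ∈ PF S := by
  refine ⟨hf.notMem, fun s _ hs0 => ?_⟩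
  by_contra hfs
  exact hs0 (left_eq_add.mp (hf.mem_maximals.2 (f + s) hfs le_self_add))

theorem sub_notMem (hf : IsFrobenius S f) (hS : IsGNS S) {x : Fin d → ℕ} (hx : x ∈ S)
    (hxf : x ≤ f) : f - x ∉ S := fun hfx =>
  hf.notMem (add_tsub_cancel_of_le hxf ▸ hS.2.1 x (f - x) hx hfx)

theorem ncard_Iic_eq_add_genus (hf : IsFrobenius S f) (hS : IsGNS S) :
    (Iic f).ncard = (Iic f ∩ S).ncard + genus S := by
  have hgaps : Iic f \ S = Sᶜ := by
    ext x
    exact ⟨fun hx => hx.2, fun hx => ⟨hf.le_of_notMem hS.2.2 hx, hx⟩⟩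
  rw [genus, ← hgaps, ncard_inter_add_ncard_sdiff_eq_ncard _ _ (finite_Iic f)]

theorem genus_eq_add_ncard_dualGaps (hf : IsFrobenius S f) (hS : IsGNS S) :
    genus S = (Iic f ∩ S).ncard + (dualGaps S f).ncard := by
  have hmirror : Sᶜ ∩ {h | f - h ∈ S} = (f - ·) '' (Iic f ∩ S) := by
    ext x
    constructor
    · rintro ⟨hx, hfx⟩
      exact ⟨f - x, ⟨mem_Iic.mpr tsub_le_self, hfx⟩,
        tsub_tsub_cancel_of_le (hf.le_of_notMem hS.2.2 hx)⟩
    · rintro ⟨y, ⟨hyf, hy⟩, rfl⟩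
      exact ⟨hf.sub_notMem hS hy hyf, by rwa [mem_ofPred_eq, tsub_tsub_cancel_of_le hyf]⟩
  have hinj : InjOn (f - ·) (Iic f ∩ S) := fun x hx y hy hxy => by
    rw [← tsub_tsub_cancel_of_le (mem_Iic.mp hx.1), ← tsub_tsub_cancel_of_le (mem_Iic.mp hy.1)]
    exact congrArg (f - ·) hxy
  rw [← hinj.ncard_image, ← hmirror, genus]
  exact (ncard_inter_add_ncard_sdiff_eq_ncard _ _ hS.2.2).symm

theorem two_mul_genus (hf : IsFrobenius S f) (hS : IsGNS S) :
    2 * genus S = ∏ i, (f i + 1) + (dualGaps S f).ncard := by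
  have := hf.ncard_Iic_eq_add_genus hS
  have := hf.genus_eq_add_ncard_dualGaps hS
  rw [← ncard_Iic_eq_prod]
  omega

theorem PF_sdiff_singleton_subset_dualGaps (hf : IsFrobenius S f) (hfin : Sᶜ.Finite) :
    PF S \ {f} ⊆ dualGaps S f := by
  rintro p ⟨⟨hpS, hpPF⟩, hpf⟩
  have hple := hf.le_of_notMem hfin hpS
  refine ⟨hpS, fun hfp => hf.notMem ?_⟩
  have hne : f - p ≠ 0 := fun h0 => hpf (le_antisymm hple (tsub_eq_zero_iff_le.mp h0))
  exact add_tsub_cancel_of_le hple ▸ hpPF (f - p) hfp hne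

theorem typ_eq_ncard_sdiff_add_one (hf : IsFrobenius S f) (hfin : Sᶜ.Finite) :
    typ S = (PF S \ {f}).ncard + 1 :=
  (ncard_sdiff_singleton_add_one hf.mem_PF (hfin.subset fun _ hp => hp.1)).symm

theorem almostSymmetric_iff (hf : IsFrobenius S f) (hS : IsGNS S) :
    AlmostSymmetric S ↔ dualGaps S f ⊆ PF S := by
  have hsub := hf.PF_sdiff_singleton_subset_dualGaps hS.2.2
  have hgenus := hf.two_mul_genus hS
  have htyp := hf.typ_eq_ncard_sdiff_add_one hS.2.2
  constructor
  · rintro ⟨h, hh, heq⟩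
    have hprod : ∏ i, (h i + 1) ≤ ∏ i, (f i + 1) :=
      Finset.prod_le_prod' fun i _ => Nat.succ_le_succ (hf.le_of_notMem hS.2.2 hh i)
    have hPF : PF S \ {f} = dualGaps S f :=
      eq_of_subset_of_ncard_le hsub (by omega) (hS.2.2.subset fun _ hx => hx.1)
    exact hPF ▸ sdiff_subset
  · intro hdual
    have hf_notMem : f ∉ dualGaps S f := fun hfd => hfd.2 (by simpa using hS.1)
    have hPF : PF S \ {f} = dualGaps S f :=
      hsub.antisymm fun h hh => ⟨hdual hh, fun hhf => hf_notMem (mem_singleton_iff.mp hhf ▸ hh)⟩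
    exact ⟨f, hf.notMem, by rw [hgenus, htyp, hPF]; ring⟩

theorem dualGaps_subset_PF_iff (hf : IsFrobenius S f) (hfin : Sᶜ.Finite) :
    dualGaps S f ⊆ PF S ↔
      ∀ h, h ∉ S → (∃ s ∈ S, h + s = f) ∨ (∃ p ∈ PF S, h + p = f) := by
  constructor
  · intro hdual h hh
    have hhf := hf.le_of_notMem hfin hh
    by_cases hfh : f - h ∈ S
    · exact .inl ⟨f - h, hfh, add_tsub_cancel_of_le hhf⟩
    · refine .inr ⟨f - h, hdual ⟨hfh, ?_⟩, add_tsub_cancel_of_le hhf⟩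
      rwa [tsub_tsub_cancel_of_le hhf]
  · intro hgaps h ⟨hh, hfh⟩
    have hcancel : ∀ x, f - h + x = f → x = h := fun x hx =>
      add_left_cancel (hx.trans (tsub_add_cancel_of_le (hf.le_of_notMem hfin hh)).symm)
    rcases hgaps (f - h) hfh with ⟨s, hs, hsf⟩ | ⟨p, hp, hpf⟩
    · exact absurd (hcancel s hsf ▸ hs) hh
    · exact hcancel p hpf ▸ hp

end IsFrobenius

theorem statement7_general (d : ℕ) (S : Set (Fin d → ℕ)) (hS : IsGNS S)
    (f : Fin d → ℕ) (hf : IsFrobenius S f) :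
    AlmostSymmetric S ↔
      ∀ h : Fin d → ℕ, h ∉ S →
        ((∃ s ∈ S, h + s = f) ∨ (∃ p ∈ PF S, h + p = f)) := by
  rw [hf.almostSymmetric_iff hS, hf.dualGaps_subset_PF_iff hS.2.2]

/-- A Frobenius GNS `(S, f)` is almost symmetric iff for every gap `h`,
either `f - h ∈ S` or `f - h ∈ PF(S)`. -/
theorem statement7 (d : ℕ) (hd : 0 < d) (S : Set (Fin d → ℕ)) (hS : IsGNS S)
    (f : Fin d → ℕ) (hf : IsFrobenius S f) :
    AlmostSymmetric S ↔
      ∀ h : Fin d → ℕ, h ∉ S →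
        ((∃ s ∈ S, h + s = f) ∨ (∃ p ∈ PF S, h + p = f)) :=
  statement7_general d S hS f hf
end

section
/- Let S ⊆ ℕ_0^d be a GNS, n ∈ S with n ≠ 0, and let ≺ be a monomial order on ℕ_0^d. Then S is almost symmetric of type t if and only if C(S,n) can be written as a disjoint union C(S,n) = {a_0 = 0 ≺ a_1 ≺ ⋯ ≺ a_m} ∪ {b_1 ≺ ⋯ ≺ b_{t−1}} (each list in ≺-increasing order) satisfying: (1) b_{t−1} ≺ a_m; (2) b_i − n ∈ ℕ_0^d for every i ∈ {1,…,t−1}; (3) b_i ≰_S b_j for all i ≠ j; (4) a_i + a_{m−i} = a_m for all i ∈ {0,1,…,m}; (5) b_j + b_{t−j} = a_m + n for all j ∈ {1,…,t−1}. -/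
open scoped BigOperators

/-!
For a gap `f`, the map `x ↦ f - x` sends the elements of `S` below `f` injectively into the gaps
below `f`. Counting gives `2 g(S) + 1 - t(S) ≥ |f + 1|_×`, with equality iff `f` is the greatest
gap and `PF(S) \ {f}` is the set of gaps `x` with `f - x` also a gap (Nari's characterization).

In that case `C(S, n)` splits into `(PF(S) \ {f}) + n`, which is stable under reflection through
`f + 2n`, and its complement, which is stable under reflection through `f + n`. A monomial order
is reversed by such a reflection, so sorting both parts gives the required lists.

Conversely, conditions (4) and (5) give `q + n ≤ a_m` for every pseudo-Frobenius `q`, so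
`f = a_m - n` is the greatest gap. They also show that the `b_j` are exactly the `p + n` with
`p ∈ PF(S) \ {f}`, paired by `p ↦ f - p`, which is Nari's condition and gives `t(S) = t`.
-/

section SortedEnum

variable {α : Type*} {r : α → α → Prop} {X : Set α} {k : ℕ} {e : ℕ → α}

def IsSortedEnum (r : α → α → Prop) (X : Set α) (k : ℕ) (e : ℕ → α) : Prop :=
  e '' Set.Iio k = X ∧ ∀ i j, i < j → j < k → r (e i) (e j)

theorem IsSortedEnum.mem (he : IsSortedEnum r X k e) {i : ℕ} (hi : i < k) : e i ∈ X :=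
  he.1 ▸ ⟨i, hi, rfl⟩

theorem exists_isSortedEnum [Nonempty α] [IsStrictTotalOrder α r] (hX : X.Finite) :
    ∃ e, IsSortedEnum r X X.ncard e := by
  classical
  let := linearOrderOfSTO r
  let g := hX.toFinset.orderEmbOfFin (Set.ncard_eq_toFinset_card X hX).symm
  refine ⟨fun i => if h : i < X.ncard then g ⟨i, h⟩ else Classical.arbitrary α, ?_, ?_⟩
  · ext x
    constructor
    · rintro ⟨i, hi : i < X.ncard, rfl⟩
      simpa [dif_pos hi] using Finset.orderEmbOfFin_mem hX.toFinset _ ⟨i, hi⟩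
    · intro hx
      obtain ⟨i, rfl⟩ : x ∈ Set.range g := by simpa [g] using hx
      exact ⟨i, i.2, dif_pos i.2⟩
  · intro i j hij hj
    simp only [dif_pos hj, dif_pos (hij.trans hj)]
    exact g.strictMono (show (⟨i, hij.trans hj⟩ : Fin X.ncard) < ⟨j, hj⟩ from hij)

theorem IsSortedEnum.eqOn [IsStrictOrder α r] {e' : ℕ → α} (he : IsSortedEnum r X k e)
    (he' : IsSortedEnum r X k e') : Set.EqOn e e' (Set.Iio k) := by
  let := partialOrderOfSO r
  have hmono : ∀ {e}, IsSortedEnum r X k e → StrictMono fun i : Fin k => e i :=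
    fun he i j hij => he.2 i j hij j.2
  have hrange : ∀ {e}, IsSortedEnum r X k e → Set.range (fun i : Fin k => e i) = X := by
    intro e he
    rw [← he.1]
    ext x
    exact ⟨fun ⟨i, hi⟩ => ⟨i, i.2, hi⟩, fun ⟨i, hi, hx⟩ => ⟨⟨i, hi⟩, hx⟩⟩
  have := ((hmono he).range_inj (hmono he')).1 ((hrange he).trans (hrange he').symm)
  exact fun i hi => congrFun this ⟨i, hi⟩

theorem IsSortedEnum.apply_rev [IsStrictOrder α r] (he : IsSortedEnum r X k e) {σ : α → α}
    (hσ : Set.MapsTo σ X X) (hσσ : ∀ x ∈ X, σ (σ x) = x)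
    (hanti : ∀ x ∈ X, ∀ y ∈ X, r x y → r (σ y) (σ x)) {i : ℕ} (hi : i < k) :
    σ (e (k - 1 - i)) = e i := by
  have hrev : IsSortedEnum r X k fun i => σ (e (k - 1 - i)) := by
    refine ⟨?_, fun i j hij hj => hanti _ (he.mem (by omega)) _ (he.mem (by omega))
      (he.2 _ _ (by omega) (by omega))⟩
    ext x
    constructor
    · rintro ⟨i, hi, rfl⟩
      exact hσ (he.mem (by omega))
    · intro hx
      obtain ⟨j, hj, hjx⟩ := he.1.symm ▸ hσ hx
      refine ⟨k - 1 - j, by simp only [Set.mem_Iio] at hj ⊢; omega, ?_⟩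
      simp only [Set.mem_Iio] at hj
      simp only [show k - 1 - (k - 1 - j) = j by omega, hjx, hσσ x hx]
  exact (he.eqOn hrev hi).symm

theorem IsSortedEnum.not_rel_zero [IsStrictOrder α r] (he : IsSortedEnum r X k e) {x : α}
    (hx : x ∈ X) : ¬ r x (e 0) := by
  obtain ⟨j, hj, rfl⟩ := he.1.symm ▸ hx
  rcases Nat.eq_zero_or_pos j with rfl | hj0
  · exact irrefl _
  · exact asymm (he.2 0 j hj0 hj)

theorem injOn_Icc_of_rel {r : α → α → Prop} [Std.Irrefl r] {b : ℕ → α} {lo hi : ℕ}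
    (h : ∀ i j, lo ≤ i → i < j → j ≤ hi → r (b i) (b j)) : Set.InjOn b (Set.Icc lo hi) := by
  intro i hi' j hj hij
  by_contra hne
  rcases Nat.lt_or_gt_of_ne hne with hlt | hlt
  · exact irrefl _ (hij ▸ h i j hi'.1 hlt hj.2)
  · exact irrefl _ (hij ▸ h j i hj.1 hlt hi'.2)

end SortedEnum

namespace IsMonomialOrder

variable {d : ℕ} {lt : (Fin d → ℕ) → (Fin d → ℕ) → Prop} {X : Set (Fin d → ℕ)}
  {c x y x' y' : Fin d → ℕ}

theorem isStrictTotalOrder (hlt : IsMonomialOrder d lt) :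
    IsStrictTotalOrder (Fin d → ℕ) lt where
  trichotomous a b hab hba := by
    by_contra hne
    exact (hlt.2.2.1 a b hne).elim hab hba
  irrefl := hlt.1
  trans := hlt.2.1

theorem lt_of_le_of_ne (hlt : IsMonomialOrder d lt) (hle : x ≤ y) (hne : x ≠ y) : lt x y := by
  have hpos : y - x ≠ 0 := fun h => hne (le_antisymm hle (tsub_eq_zero_iff_le.1 h))
  simpa [tsub_add_cancel_of_le hle] using hlt.2.2.2.1 x 0 (y - x) (hlt.2.2.2.2 _ hpos)

theorem lt_of_add_eq_add (hlt : IsMonomialOrder d lt) (h : x + x' = y + y') (hxy : lt x y) :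
    lt y' x' := by
  have := hlt.isStrictTotalOrder
  rcases trichotomous_of lt y' x' with hlt' | rfl | hgt
  · exact hlt'
  · exact absurd (add_right_cancel h ▸ hxy) (irrefl _)
  · have h1 := hlt.2.2.2.1 x' x y hxy
    have h2 := hlt.2.2.2.1 y x' y' hgt
    rw [add_comm x' y, add_comm y' y, ← h] at h2
    exact absurd (_root_.trans h1 h2) (irrefl _)

theorem add_apply_rev (hlt : IsMonomialOrder d lt) {k : ℕ} {e : ℕ → Fin d → ℕ}
    (he : IsSortedEnum lt X k e) (hX : ∀ x ∈ X, x ≤ c ∧ c - x ∈ X) {i : ℕ} (hi : i < k) :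
    e i + e (k - 1 - i) = c := by
  have := hlt.isStrictTotalOrder
  have hrev := he.apply_rev (σ := (c - ·)) (fun x hx => (hX x hx).2)
    (fun x hx => tsub_tsub_cancel_of_le (hX x hx).1)
    (fun x hx y hy hxy => hlt.lt_of_add_eq_add
      (by rw [add_tsub_cancel_of_le (hX x hx).1, add_tsub_cancel_of_le (hX y hy).1]) hxy) hi
  rw [← hrev, tsub_add_cancel_of_le (hX _ (he.mem (by omega))).1]

theorem exists_symmetric_enum_Icc_zero (hlt : IsMonomialOrder d lt) (hfin : X.Finite)
    (h0 : 0 ∈ X) (hX : ∀ x ∈ X, x ≤ c ∧ c - x ∈ X) :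
    ∃ (m : ℕ) (a : ℕ → Fin d → ℕ), a 0 = 0 ∧ a m = c ∧
      (∀ i j, i < j → j ≤ m → lt (a i) (a j)) ∧ a '' Set.Icc 0 m = X ∧
      ∀ i, i ≤ m → a i + a (m - i) = c := by
  have := hlt.isStrictTotalOrder
  obtain ⟨a, ha⟩ := exists_isSortedEnum (r := lt) hfin
  have hpos : 0 < X.ncard := (Set.ncard_pos hfin).2 ⟨0, h0⟩
  have hsym : ∀ i, i ≤ X.ncard - 1 → a i + a (X.ncard - 1 - i) = c :=
    fun i hi => hlt.add_apply_rev ha hX (by omega)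
  have ha0 : a 0 = 0 := by
    by_contra hne
    exact ha.not_rel_zero h0 (hlt.2.2.2.2 _ hne)
  refine ⟨X.ncard - 1, a, ha0, ?_, fun i j hij hj => ha.2 i j hij (by omega), ?_, hsym⟩
  · simpa [ha0] using hsym 0 (Nat.zero_le _)
  · refine Eq.trans ?_ ha.1
    congr 1
    ext i
    simp only [Set.mem_Icc, Set.mem_Iio]
    omega

theorem exists_symmetric_enum_Icc_one (hlt : IsMonomialOrder d lt) (hfin : X.Finite)
    (hX : ∀ x ∈ X, x ≤ c ∧ c - x ∈ X) :
    ∃ b : ℕ → Fin d → ℕ, (∀ i j, 1 ≤ i → i < j → j ≤ X.ncard → lt (b i) (b j)) ∧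
      b '' Set.Icc 1 X.ncard = X ∧
      ∀ j, 1 ≤ j → j ≤ X.ncard → b j + b (X.ncard + 1 - j) = c := by
  have := hlt.isStrictTotalOrder
  obtain ⟨e, he⟩ := exists_isSortedEnum (r := lt) hfin
  refine ⟨fun i => e (i - 1), fun i j hi hij hj => he.2 _ _ (by omega) (by omega), ?_,
    fun j hj1 hj => ?_⟩
  · refine Eq.trans ?_ he.1
    ext x
    constructor
    · rintro ⟨i, hi, rfl⟩
      exact ⟨i - 1, by simp only [Set.mem_Icc, Set.mem_Iio] at hi ⊢; omega, rfl⟩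
    · rintro ⟨i, hi, rfl⟩
      exact ⟨i + 1, by simp only [Set.mem_Icc, Set.mem_Iio] at hi ⊢; omega, by simp⟩
  · simpa [show X.ncard + 1 - j - 1 = X.ncard - 1 - (j - 1) by omega] using
      hlt.add_apply_rev he hX (i := j - 1) (by omega)

end IsMonomialOrder

section Gaps

variable {d : ℕ} {S : Set (Fin d → ℕ)} {f p q x y : Fin d → ℕ}

theorem IsGNS.add_mem (hS : IsGNS S) (hx : x ∈ S) (hy : y ∈ S) : x + y ∈ S :=
  hS.2.1 x y hx hy

theorem exists_mem_PF_leS (hS : IsGNS S) (hp : p ∉ S) : ∃ q ∈ PF S, leS S p q := by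
  obtain ⟨q, hq⟩ := (hS.2.2.subset fun q (hq : q ∉ S ∧ leS S p q) => hq.1).exists_maximal
    ⟨p, hp, 0, hS.1, add_zero p⟩
  refine ⟨q, ⟨hq.1.1, fun s hs hs0 => ?_⟩, hq.1.2⟩
  by_contra hqs
  obtain ⟨s', hs', rfl⟩ := hq.1.2
  have := hq.2 ⟨hqs, s' + s, hS.add_mem hs' hs, by rw [add_assoc]⟩ le_self_add
  exact hs0 (nonpos_iff_eq_zero.1 (by simpa using this))

theorem eq_of_leS_of_mem_PF (hp : p ∈ PF S) (hq : q ∈ PF S) (h : leS S p q) : p = q := by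
  obtain ⟨s, hs, rfl⟩ := h
  by_contra hne
  exact hq.1 (hp.2 s hs fun hs0 => hne (by rw [hs0, add_zero]))

theorem mem_PF_of_isGreatest (hf : IsGreatest Sᶜ f) : f ∈ PF S := by
  refine ⟨hf.1, fun s _ hs0 => ?_⟩
  by_contra hfs
  exact hs0 (nonpos_iff_eq_zero.1 (by simpa using hf.2 hfs))

def pairedGaps (S : Set (Fin d → ℕ)) (f : Fin d → ℕ) : Set (Fin d → ℕ) :=
  {x | x ≤ f ∧ x ∉ S ∧ f - x ∉ S}

theorem pairedGaps_finite : (pairedGaps S f).Finite :=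
  (Set.finite_Iic f).subset fun _ hx => hx.1

theorem self_notMem_pairedGaps (hS : IsGNS S) : f ∉ pairedGaps S f :=
  fun h => h.2.2 (by simpa using hS.1)

theorem sub_mem_pairedGaps (hx : x ∈ pairedGaps S f) : f - x ∈ pairedGaps S f :=
  ⟨tsub_le_self, hx.2.2, by rw [tsub_tsub_cancel_of_le hx.1]; exact hx.2.1⟩

theorem ncard_Iic (f : Fin d → ℕ) : (Set.Iic f).ncard = ∏ i, (f i + 1) := by
  rw [← Finset.coe_Iic, Set.ncard_coe_finset, Pi.card_Iic]
  simp

theorem ncard_Iic_diff (hS : IsGNS S) (hf : f ∉ S) :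
    (Set.Iic f \ S).ncard = (Set.Iic f ∩ S).ncard + (pairedGaps S f).ncard := by
  have hsplit : Set.Iic f \ S = (f - ·) '' (Set.Iic f ∩ S) ∪ pairedGaps S f := by
    ext y
    constructor
    · rintro ⟨hy, hyS⟩
      by_cases hfy : f - y ∈ S
      · exact Or.inl ⟨f - y, ⟨Set.mem_Iic.2 tsub_le_self, hfy⟩, tsub_tsub_cancel_of_le hy⟩
      · exact Or.inr ⟨hy, hyS, hfy⟩
    · rintro (⟨x, ⟨hx : x ≤ f, hxS⟩, rfl⟩ | ⟨hy, hyS, -⟩)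
      · refine ⟨Set.mem_Iic.2 tsub_le_self, fun h => hf ?_⟩
        simpa [add_tsub_cancel_of_le hx] using hS.add_mem hxS h
      · exact ⟨hy, hyS⟩
  have hdisj : Disjoint ((f - ·) '' (Set.Iic f ∩ S)) (pairedGaps S f) := by
    rw [Set.disjoint_left]
    rintro _ ⟨x, ⟨hx : x ≤ f, hxS⟩, rfl⟩ ⟨-, -, h⟩
    exact h (by rwa [tsub_tsub_cancel_of_le hx])
  have hinj : Set.InjOn (f - ·) (Set.Iic f ∩ S) :=
    fun x ⟨(hx : x ≤ f), _⟩ y ⟨(hy : y ≤ f), _⟩ hxy => by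
      simpa [tsub_tsub_cancel_of_le hx, tsub_tsub_cancel_of_le hy] using congrArg (f - ·) hxy
  rw [hsplit, Set.ncard_union_eq hdisj (((Set.finite_Iic f).subset
    Set.inter_subset_left).image _) pairedGaps_finite, hinj.ncard_image]

theorem two_mul_genus_add_one (hS : IsGNS S) (hf : f ∉ S) :
    2 * genus S + 1 =
      ∏ i, (f i + 1) + (pairedGaps S f).ncard + 2 * (Sᶜ \ Set.Iic f).ncard + 1 := by
  have hbox := Set.ncard_inter_add_ncard_sdiff_eq_ncard (Set.Iic f) S (Set.finite_Iic f)
  have hgaps := Set.ncard_inter_add_ncard_sdiff_eq_ncard Sᶜ (Set.Iic f) hS.2.2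
  rw [Set.inter_comm, ← Set.sdiff_eq] at hgaps
  rw [ncard_Iic] at hbox
  have := ncard_Iic_diff hS hf
  rw [genus]
  omega

theorem PF_subset_insert (hf : f ∉ S) :
    PF S ⊆ insert f (pairedGaps S f ∪ (Sᶜ \ Set.Iic f)) := by
  intro p hp
  by_cases hpf : p ≤ f
  · rcases eq_or_ne p f with rfl | hne
    · exact Or.inl rfl
    · refine Or.inr (Or.inl ⟨hpf, hp.1, fun h => hf ?_⟩)
      have hpos : f - p ≠ 0 := fun h0 => hne (le_antisymm hpf (tsub_eq_zero_iff_le.1 h0))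
      simpa [add_tsub_cancel_of_le hpf] using hp.2 _ h hpos
  · exact Or.inr (Or.inr ⟨hp.1, hpf⟩)

theorem typ_le (hS : IsGNS S) (hf : f ∉ S) :
    typ S ≤ (pairedGaps S f).ncard + (Sᶜ \ Set.Iic f).ncard + 1 := by
  have hfin : (Sᶜ \ Set.Iic f).Finite := hS.2.2.subset Set.sdiff_subset
  calc typ S ≤ (insert f (pairedGaps S f ∪ (Sᶜ \ Set.Iic f))).ncard :=
        Set.ncard_le_ncard (PF_subset_insert hf) ((pairedGaps_finite.union hfin).insert f)
    _ ≤ (pairedGaps S f ∪ (Sᶜ \ Set.Iic f)).ncard + 1 := Set.ncard_insert_le _ _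
    _ ≤ _ := by
        have := Set.ncard_union_le (pairedGaps S f) (Sᶜ \ Set.Iic f)
        omega

theorem typ_eq_of_PF_eq (hS : IsGNS S) (hPF : PF S = insert f (pairedGaps S f)) :
    typ S = (pairedGaps S f).ncard + 1 := by
  rw [typ, hPF, Set.ncard_insert_of_notMem (self_notMem_pairedGaps hS) pairedGaps_finite]

theorem almostSymmetric_iff (hS : IsGNS S) :
    AlmostSymmetric S ↔ ∃ f, IsGreatest Sᶜ f ∧ PF S = insert f (pairedGaps S f) := by
  constructor
  · rintro ⟨f, hf, heq⟩
    have hgen := two_mul_genus_add_one hS hf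
    have htyp := typ_le hS hf
    have hempty : Sᶜ \ Set.Iic f = ∅ :=
      (Set.ncard_eq_zero (hS.2.2.subset Set.sdiff_subset)).1 (by omega)
    have hsub : PF S ⊆ insert f (pairedGaps S f) := by
      simpa [hempty] using PF_subset_insert hf
    refine ⟨f, ⟨hf, Set.sdiff_eq_empty.1 hempty⟩, Set.eq_of_subset_of_ncard_le hsub ?_
      (pairedGaps_finite.insert f)⟩
    rw [Set.ncard_insert_of_notMem (self_notMem_pairedGaps hS) pairedGaps_finite]
    rw [hempty, Set.ncard_empty] at hgen
    change _ ≤ typ S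
    omega
  · rintro ⟨f, hf, hPF⟩
    have hempty : Sᶜ \ Set.Iic f = ∅ := Set.sdiff_eq_empty.2 hf.2
    refine ⟨f, hf.1, ?_⟩
    rw [two_mul_genus_add_one hS hf.1, typ_eq_of_PF_eq hS hPF, hempty, Set.ncard_empty]
    ring

theorem PF_eq_insert_pairedGaps (hS : IsGNS S) (hf : IsGreatest Sᶜ f)
    (hsymm : ∀ p ∈ PF S, p ≠ f → f - p ∈ PF S) : PF S = insert f (pairedGaps S f) := by
  have hempty : Sᶜ \ Set.Iic f = ∅ := Set.sdiff_eq_empty.2 hf.2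
  refine Set.Subset.antisymm (fun p hp => by simpa [hempty] using PF_subset_insert hf.1 hp)
    (Set.insert_subset (mem_PF_of_isGreatest hf) fun x hx => ?_)
  obtain ⟨q, hq, s, hs, rfl⟩ := exists_mem_PF_leS hS hx.2.1
  have hqf : x + s ≠ f := fun h => hx.2.2 (by rw [← h, add_tsub_cancel_left]; exact hs)
  have hfx : f - x = f - (x + s) + s := by
    rw [tsub_add_eq_add_tsub (hf.2 hq.1), add_tsub_add_eq_tsub_right]
  by_cases hs0 : s = 0
  · simpa [hs0] using hq
  · exact absurd (hfx ▸ (hsymm _ hq hqf).2 s hs hs0) hx.2.2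

end Gaps

section Apery

variable {d : ℕ} {S : Set (Fin d → ℕ)} {f n p u w x y : Fin d → ℕ}

theorem leS_add_right_iff : leS S (x + n) (y + n) ↔ leS S x y := by
  simp only [leS, add_right_comm x n, add_left_inj]

theorem add_notMem_Ap (hu : u ∈ S) : u + n ∉ Ap S n := fun h => h.2 ⟨u, hu, rfl⟩

theorem add_mem_Cred_of_mem_PF (hn : n ∈ S) (hn0 : n ≠ 0) (hp : p ∈ PF S) :
    p + n ∈ Cred S n :=
  ⟨⟨hp.2 n hn hn0, fun ⟨_, hu, he⟩ => hp.1 (add_right_cancel he ▸ hu)⟩, p, hp.1, le_rfl⟩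

theorem zero_mem_Cred (hS : IsGNS S) (hn0 : n ≠ 0) (hf : f ∉ S) : 0 ∈ Cred S n :=
  ⟨⟨hS.1, fun ⟨_, _, he⟩ => hn0 (add_eq_zero.1 he).2⟩, f, hf, zero_le⟩

theorem Cred_subset_Iic (hf : IsGreatest Sᶜ f) : Cred S n ⊆ Set.Iic (f + n) :=
  fun _ ⟨_, _, hh, hle⟩ => hle.trans (add_le_add_left (hf.2 hh) n)

theorem sub_mem_Cred_diff (hS : IsGNS S) (hf : IsGreatest Sᶜ f)
    (hw : w ∈ Cred S n \ (· + n) '' pairedGaps S f) :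
    f + n - w ∈ Cred S n \ (· + n) '' pairedGaps S f := by
  obtain ⟨hwC, hwB⟩ := hw
  have hwv : w + (f + n - w) = f + n := add_tsub_cancel_of_le (Cred_subset_Iic hf hwC)
  set v := f + n - w
  have hvS : v ∈ S := by
    by_contra hvS
    have hvf : v ≤ f := hf.2 hvS
    have hw_eq : w = f - v + n := by
      rw [tsub_add_eq_add_tsub hvf, ← hwv, add_tsub_cancel_right]
    have hfv : f - v ∉ S := fun h => add_notMem_Ap h (hw_eq ▸ hwC.1)
    exact hwB ⟨f - v, ⟨tsub_le_self, hfv, by rwa [tsub_tsub_cancel_of_le hvf]⟩, hw_eq.symm⟩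
  refine ⟨⟨⟨hvS, ?_⟩, f, hf.1, tsub_le_self⟩, ?_⟩
  · rintro ⟨u, hu, hun⟩
    have hwu : w + u = f := add_right_cancel (by rw [add_assoc, hun, hwv])
    exact hf.1 (hwu ▸ hS.add_mem hwC.1.1 hu)
  · rintro ⟨p, hp, hpv : p + n = v⟩
    have hwp : w + p = f := add_right_cancel (by rw [add_assoc, hpv, hwv])
    exact hp.2.2 (by rw [← hwp, add_tsub_cancel_right]; exact hwC.1.1)

theorem sub_mem_image_pairedGaps (hw : w ∈ (· + n) '' pairedGaps S f) :
    w ≤ f + n + n ∧ f + n + n - w ∈ (· + n) '' pairedGaps S f := by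
  obtain ⟨p, hp, rfl⟩ := hw
  refine ⟨add_le_add_left (hp.1.trans le_self_add) n, f - p, sub_mem_pairedGaps hp, ?_⟩
  change f - p + n = f + n + n - (p + n)
  rw [add_tsub_add_eq_tsub_right, tsub_add_eq_add_tsub hp.1]

end Apery

structure IsAperyArrangement {d : ℕ} (S : Set (Fin d → ℕ)) (n : Fin d → ℕ)
    (lt : (Fin d → ℕ) → (Fin d → ℕ) → Prop) (t m : ℕ) (a b : ℕ → Fin d → ℕ) : Prop where
  a_zero : a 0 = 0
  a_lt : ∀ i j, i < j → j ≤ m → lt (a i) (a j)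
  b_lt : ∀ i j, 1 ≤ i → i < j → j ≤ t - 1 → lt (b i) (b j)
  Cred_eq : Cred S n = a '' Set.Icc 0 m ∪ b '' Set.Icc 1 (t - 1)
  inter_eq_empty : (a '' Set.Icc 0 m) ∩ (b '' Set.Icc 1 (t - 1)) = ∅
  b_last_lt : 2 ≤ t → lt (b (t - 1)) (a m)
  le_b : ∀ i, 1 ≤ i → i ≤ t - 1 → n ≤ b i
  not_leS_b : ∀ i j, 1 ≤ i → i ≤ t - 1 → 1 ≤ j → j ≤ t - 1 → i ≠ j → ¬ leS S (b i) (b j)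
  a_add_a : ∀ i, i ≤ m → a i + a (m - i) = a m
  b_add_b : ∀ j, 1 ≤ j → j ≤ t - 1 → b j + b (t - j) = a m + n

section

variable {d : ℕ} {S : Set (Fin d → ℕ)} {f n : Fin d → ℕ}
  {lt : (Fin d → ℕ) → (Fin d → ℕ) → Prop}

/-- The `b`'s enumerate `pairedGaps S f + n`, the `a`'s the rest of `C(S, n)`. -/
theorem exists_isAperyArrangement (hS : IsGNS S) (hn : n ∈ S) (hn0 : n ≠ 0)
    (hlt : IsMonomialOrder d lt) (hf : IsGreatest Sᶜ f)
    (hPF : PF S = insert f (pairedGaps S f)) :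
    ∃ m a b, IsAperyArrangement S n lt (typ S) m a b := by
  have := hlt.isStrictTotalOrder
  set B := (· + n) '' pairedGaps S f
  have hPB : pairedGaps S f ⊆ PF S := hPF ▸ Set.subset_insert _ _
  have hBC : B ⊆ Cred S n :=
    Set.image_subset_iff.2 fun p hp => add_mem_Cred_of_mem_PF hn hn0 (hPB hp)
  have hfin : (Cred S n).Finite := (Set.finite_Iic _).subset (Cred_subset_Iic hf)
  have h0 : 0 ∈ Cred S n \ B :=
    ⟨zero_mem_Cred hS hn0 hf.1, fun ⟨_, _, h⟩ => hn0 (add_eq_zero.1 h).2⟩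
  obtain ⟨m, a, ha0, ham, ha_lt, ha_img, ha_sym⟩ :=
    hlt.exists_symmetric_enum_Icc_zero (hfin.subset Set.sdiff_subset) h0
      fun w hw => ⟨Cred_subset_Iic hf hw.1, sub_mem_Cred_diff hS hf hw⟩
  have htyp := typ_eq_of_PF_eq hS hPF
  obtain ⟨b, hb_lt, hb_img, hb_sym⟩ :=
    hlt.exists_symmetric_enum_Icc_one (hfin.subset hBC) fun _ => sub_mem_image_pairedGaps
  have hBcard : B.ncard = typ S - 1 := by
    rw [(add_left_injective n).injOn.ncard_image, htyp, Nat.add_sub_cancel]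
  rw [hBcard] at hb_lt hb_img hb_sym
  rw [Nat.sub_add_cancel (by omega)] at hb_sym
  have hbB : ∀ i, 1 ≤ i → i ≤ typ S - 1 → ∃ p ∈ pairedGaps S f, p + n = b i := by
    intro i h1 h2
    obtain ⟨p, hp, hpb⟩ : b i ∈ B := hb_img ▸ Set.mem_image_of_mem b ⟨h1, h2⟩
    exact ⟨p, hp, hpb⟩
  refine ⟨m, a, b, ⟨ha0, ha_lt, hb_lt, ?_, ?_, fun ht => ?_, fun i h1 h2 => ?_,
    fun i j hi1 hi2 hj1 hj2 hij hle => ?_, fun i hi => ham ▸ ha_sym i hi,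
    fun j h1 h2 => ham ▸ hb_sym j h1 h2⟩⟩
  · rw [ha_img, hb_img, Set.sdiff_union_of_subset hBC]
  · rw [ha_img, hb_img, Set.sdiff_inter_self]
  · obtain ⟨p, hp, hpb⟩ := hbB _ (by omega) le_rfl
    rw [← hpb, ham]
    exact hlt.lt_of_le_of_ne (add_le_add_left hp.1 n)
      fun h => self_notMem_pairedGaps hS (add_right_cancel h ▸ hp)
  · obtain ⟨p, -, hpb⟩ := hbB i h1 h2
    exact hpb ▸ le_add_self
  · obtain ⟨p, hp, hpb⟩ := hbB i hi1 hi2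
    obtain ⟨q, hq, hqb⟩ := hbB j hj1 hj2
    rw [← hpb, ← hqb, leS_add_right_iff] at hle
    refine hij (injOn_Icc_of_rel hb_lt ⟨hi1, hi2⟩ ⟨hj1, hj2⟩ ?_)
    rw [← hpb, ← hqb, eq_of_leS_of_mem_PF (hPB hp) (hPB hq) hle]

end

namespace IsAperyArrangement

variable {d : ℕ} {S : Set (Fin d → ℕ)} {f n p : Fin d → ℕ}
  {lt : (Fin d → ℕ) → (Fin d → ℕ) → Prop} {t m : ℕ} {a b : ℕ → Fin d → ℕ}

theorem a_mem_Cred (harr : IsAperyArrangement S n lt t m a b) {i : ℕ} (hi : i ≤ m) :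
    a i ∈ Cred S n :=
  harr.Cred_eq ▸ Or.inl ⟨i, ⟨Nat.zero_le i, hi⟩, rfl⟩

theorem b_mem_Cred (harr : IsAperyArrangement S n lt t m a b) {j : ℕ} (h1 : 1 ≤ j)
    (h2 : j ≤ t - 1) : b j ∈ Cred S n :=
  harr.Cred_eq ▸ Or.inr ⟨j, ⟨h1, h2⟩, rfl⟩

theorem add_le_a_last (harr : IsAperyArrangement S n lt t m a b) (hn : n ∈ S) (hn0 : n ≠ 0)
    (hp : p ∈ PF S) : p + n ≤ a m := by
  obtain ⟨i, ⟨-, hi⟩, hpi⟩ | ⟨j, ⟨hj1, hj2⟩, hpj⟩ :=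
    harr.Cred_eq ▸ add_mem_Cred_of_mem_PF hn hn0 hp
  · rw [← hpi, ← harr.a_add_a i hi]
    exact le_self_add
  · have hnb := harr.le_b (t - j) (by omega) (by omega)
    calc p + n = b j := hpj.symm
      _ ≤ b j + (b (t - j) - n) := le_self_add
      _ = a m := by
        rw [← add_tsub_assoc_of_le hnb, harr.b_add_b j hj1 hj2, add_tsub_cancel_right]

theorem exists_isGreatest (harr : IsAperyArrangement S n lt t m a b) (hS : IsGNS S)
    (hn : n ∈ S) (hn0 : n ≠ 0) : ∃ f, a m = f + n ∧ IsGreatest Sᶜ f := by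
  have hle : ∀ x ∉ S, x + n ≤ a m := fun x hx => by
    obtain ⟨q, hq, s, -, rfl⟩ := exists_mem_PF_leS hS hx
    exact (add_le_add_left le_self_add n).trans (harr.add_le_a_last hn hn0 hq)
  obtain ⟨h, hh, -⟩ := (harr.a_mem_Cred (Nat.zero_le m)).2
  have hnm : n ≤ a m := le_add_self.trans (hle h hh)
  refine ⟨a m - n, (tsub_add_cancel_of_le hnm).symm, fun hS' => ?_,
    fun x hx => le_tsub_of_add_le_right (hle x hx)⟩
  exact add_notMem_Ap hS' (by rw [tsub_add_cancel_of_le hnm]; exact (harr.a_mem_Cred le_rfl).1)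

theorem eq_of_a_eq_add (harr : IsAperyArrangement S n lt t m a b) (ham : a m = f + n)
    (hf : f ∉ S) (hp : p ∈ PF S) {i : ℕ} (hi : i ≤ m) (hpi : a i = p + n) : p = f := by
  have hpf : p + a (m - i) = f :=
    add_right_cancel (by rw [add_right_comm, ← hpi, harr.a_add_a i hi, ham])
  by_contra hne
  have h0 : a (m - i) ≠ 0 := fun h0 => hne (by simpa [h0] using hpf)
  exact hf (hpf ▸ hp.2 _ (harr.a_mem_Cred (Nat.sub_le m i)).1.1 h0)

theorem add_mem_b_image (harr : IsAperyArrangement S n lt t m a b) (hn : n ∈ S)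
    (hn0 : n ≠ 0) (ham : a m = f + n) (hf : f ∉ S) (hp : p ∈ PF S) (hpf : p ≠ f) :
    p + n ∈ b '' Set.Icc 1 (t - 1) := by
  obtain ⟨i, hi, hpi⟩ | h := harr.Cred_eq ▸ add_mem_Cred_of_mem_PF hn hn0 hp
  · exact absurd (harr.eq_of_a_eq_add ham hf hp hi.2 hpi) hpf
  · exact h

theorem image_PF_diff (harr : IsAperyArrangement S n lt t m a b) (hS : IsGNS S) (hn : n ∈ S)
    (hn0 : n ≠ 0) (ham : a m = f + n) (hf : f ∉ S) :
    (· + n) '' (PF S \ {f}) = b '' Set.Icc 1 (t - 1) := by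
  refine Set.Subset.antisymm
    (Set.image_subset_iff.2 fun p hp => harr.add_mem_b_image hn hn0 ham hf hp.1 hp.2) ?_
  rintro _ ⟨j, ⟨hj1, hj2⟩, rfl⟩
  have hnb := harr.le_b j hj1 hj2
  have hx : b j - n ∉ S := fun h => add_notMem_Ap h
    (by rw [tsub_add_cancel_of_le hnb]; exact (harr.b_mem_Cred hj1 hj2).1)
  obtain ⟨q, hq, s, hs, hxq⟩ := exists_mem_PF_leS hS hx
  have hbjq : b j + s = q + n := by rw [← hxq, add_right_comm, tsub_add_cancel_of_le hnb]
  have hqf : q ≠ f := by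
    rintro rfl
    have hpartner : b (t - j) = s + n := add_left_cancel (a := b j) <| by
      rw [harr.b_add_b j hj1 hj2, ham, ← hbjq, add_assoc]
    exact add_notMem_Ap hs (hpartner ▸ (harr.b_mem_Cred (by omega) (by omega)).1)
  obtain ⟨k, hk, hbk⟩ := harr.add_mem_b_image hn hn0 ham hf hq hqf
  obtain rfl : j = k := by
    by_contra hne
    exact harr.not_leS_b j k hj1 hj2 hk.1 hk.2 hne ⟨s, hs, hbjq.trans hbk.symm⟩
  exact ⟨q, ⟨hq, hqf⟩, hbk.symm⟩

theorem typ_eq (harr : IsAperyArrangement S n lt t m a b) (hS : IsGNS S) (hn : n ∈ S)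
    (hn0 : n ≠ 0) (hlt : IsMonomialOrder d lt) (ham : a m = f + n) (hf : IsGreatest Sᶜ f)
    (ht : 1 ≤ t) : typ S = t := by
  have := hlt.isStrictTotalOrder
  have hcard := congrArg Set.ncard (harr.image_PF_diff hS hn hn0 ham hf.1)
  rw [(add_left_injective n).injOn.ncard_image, (injOn_Icc_of_rel harr.b_lt).ncard_image,
    Set.ncard_Icc_nat] at hcard
  have := Set.ncard_sdiff_singleton_add_one (mem_PF_of_isGreatest hf)
    (hS.2.2.subset fun _ h => h.1)
  rw [typ]
  omega

theorem PF_eq (harr : IsAperyArrangement S n lt t m a b) (hS : IsGNS S) (hn : n ∈ S)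
    (hn0 : n ≠ 0) (ham : a m = f + n) (hf : IsGreatest Sᶜ f) :
    PF S = insert f (pairedGaps S f) := by
  refine PF_eq_insert_pairedGaps hS hf fun p hp hpf => ?_
  obtain ⟨j, ⟨hj1, hj2⟩, hpj⟩ := harr.add_mem_b_image hn hn0 ham hf.1 hp hpf
  obtain ⟨q, ⟨hq, -⟩, hqb : q + n = b (t - j)⟩ : b (t - j) ∈ (· + n) '' (PF S \ {f}) :=
    (harr.image_PF_diff hS hn hn0 ham hf.1).symm ▸ ⟨t - j, ⟨by omega, by omega⟩, rfl⟩
  have hpq : p + q = f := add_right_cancel (b := n + n) <| by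
    rw [← add_add_add_comm, ← hpj, hqb, harr.b_add_b j hj1 hj2, ham, add_assoc]
  rwa [← hpq, add_tsub_cancel_left]

end IsAperyArrangement

theorem statement12_general (d : ℕ) (S : Set (Fin d → ℕ)) (hS : IsGNS S)
    (n : Fin d → ℕ) (hn : n ∈ S) (hn0 : n ≠ 0)
    (lt : (Fin d → ℕ) → (Fin d → ℕ) → Prop) (hlt : IsMonomialOrder d lt)
    (t : ℕ) (ht : 1 ≤ t) :
    (AlmostSymmetric S ∧ typ S = t) ↔
      ∃ (m : ℕ) (a b : ℕ → (Fin d → ℕ)),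
        a 0 = 0 ∧
        (∀ i j, i < j → j ≤ m → lt (a i) (a j)) ∧
        (∀ i j, 1 ≤ i → i < j → j ≤ t - 1 → lt (b i) (b j)) ∧
        Cred S n = a '' Set.Icc 0 m ∪ b '' Set.Icc 1 (t - 1) ∧
        (a '' Set.Icc 0 m) ∩ (b '' Set.Icc 1 (t - 1)) = ∅ ∧
        (2 ≤ t → lt (b (t - 1)) (a m)) ∧
        (∀ i, 1 ≤ i → i ≤ t - 1 → n ≤ b i) ∧
        (∀ i j, 1 ≤ i → i ≤ t - 1 → 1 ≤ j → j ≤ t - 1 → i ≠ j → ¬ leS S (b i) (b j)) ∧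
        (∀ i, i ≤ m → a i + a (m - i) = a m) ∧
        (∀ j, 1 ≤ j → j ≤ t - 1 → b j + b (t - j) = a m + n) := by
  rw [almostSymmetric_iff hS]
  constructor
  · rintro ⟨⟨f, hf, hPF⟩, rfl⟩
    obtain ⟨m, a, b, h⟩ := exists_isAperyArrangement hS hn hn0 hlt hf hPF
    exact ⟨m, a, b, h.a_zero, h.a_lt, h.b_lt, h.Cred_eq, h.inter_eq_empty, h.b_last_lt, h.le_b,
      h.not_leS_b, h.a_add_a, h.b_add_b⟩
  · rintro ⟨m, a, b, h₁, h₂, h₃, h₄, h₅, h₆, h₇, h₈, h₉, h₁₀⟩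
    have harr : IsAperyArrangement S n lt t m a b := ⟨h₁, h₂, h₃, h₄, h₅, h₆, h₇, h₈, h₉, h₁₀⟩
    obtain ⟨f, ham, hf⟩ := harr.exists_isGreatest hS hn hn0
    exact ⟨⟨f, hf, harr.PF_eq hS hn hn0 ham hf⟩, harr.typ_eq hS hn hn0 hlt ham hf ht⟩

/-- characterization of almost symmetric GNSs of type `t` via an
arrangement of the reduced Apéry set. -/
theorem statement12 (d : ℕ) (hd : 0 < d) (S : Set (Fin d → ℕ)) (hS : IsGNS S)
    (n : Fin d → ℕ) (hn : n ∈ S) (hn0 : n ≠ 0)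
    (lt : (Fin d → ℕ) → (Fin d → ℕ) → Prop) (hlt : IsMonomialOrder d lt)
    (t : ℕ) (ht : 1 ≤ t) :
    (AlmostSymmetric S ∧ typ S = t) ↔
      ∃ (m : ℕ) (a b : ℕ → (Fin d → ℕ)),
        a 0 = 0 ∧
        (∀ i j, i < j → j ≤ m → lt (a i) (a j)) ∧
        (∀ i j, 1 ≤ i → i < j → j ≤ t - 1 → lt (b i) (b j)) ∧
        Cred S n = a '' Set.Icc 0 m ∪ b '' Set.Icc 1 (t - 1) ∧
        (a '' Set.Icc 0 m) ∩ (b '' Set.Icc 1 (t - 1)) = ∅ ∧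
        (2 ≤ t → lt (b (t - 1)) (a m)) ∧
        (∀ i, 1 ≤ i → i ≤ t - 1 → n ≤ b i) ∧
        (∀ i j, 1 ≤ i → i ≤ t - 1 → 1 ≤ j → j ≤ t - 1 → i ≠ j → ¬ leS S (b i) (b j)) ∧
        (∀ i, i ≤ m → a i + a (m - i) = a m) ∧
        (∀ j, 1 ≤ j → j ≤ t - 1 → b j + b (t - j) = a m + n) :=
  statement12_general d S hS n hn hn0 lt hlt t ht
end
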